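/- Let A ∈ ℝ^{n×n}. Let Ū ∈ St(r,n) satisfy (I_n − ŪŪᵀ)·A·Ū = 0 and let V̄ ∈ St(r,n) satisfy (I_n − V̄V̄ᵀ)·Aᵀ·V̄ = 0. Then the intertwining identity (V̄ᵀŪ)·(ŪᵀAŪ) = (V̄ᵀAV̄)·(V̄ᵀŪ) holds; consequently, if the r×r matrix V̄ᵀŪ is invertible, then ŪᵀAŪ = (V̄ᵀŪ)⁻¹·(V̄ᵀAV̄)·(V̄ᵀŪ), i.e., A_Ū and A_V̄ are similar and have the same eigenvalues. -/

import Mathlib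

/-!
The equilibrium condition for `Ū` says that its columns span an `A`-invariant subspace, so
`A Ū = Ū A_Ū`; likewise `V̄ᵀ A = A_V̄ V̄ᵀ`. Both sides of the intertwining identity are then
`V̄ᵀ A Ū`, and similarity follows by cancelling the invertible factor `V̄ᵀ Ū`.
-/

open Matrix

namespace Matrix

variable {R : Type*} {n r : Type*} [Fintype n] [Fintype r]

theorem mul_eq_mul_reduced_of_oja_equilibrium [Ring R] [DecidableEq n]
    {A : Matrix n n R} {U : Matrix n r R} (h : (1 - U * Uᵀ) * A * U = 0) :
    A * U = U * (Uᵀ * A * U) := by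
  rw [Matrix.sub_mul, Matrix.sub_mul, Matrix.one_mul, sub_eq_zero] at h
  simpa only [Matrix.mul_assoc] using h

theorem transpose_mul_eq_reduced_mul_of_oja_equilibrium [CommRing R] [DecidableEq n]
    {A : Matrix n n R} {V : Matrix n r R} (h : (1 - V * Vᵀ) * Aᵀ * V = 0) :
    Vᵀ * A = (Vᵀ * A * V) * Vᵀ := by
  simpa only [transpose_mul, transpose_transpose, Matrix.mul_assoc] using
    congrArg transpose (mul_eq_mul_reduced_of_oja_equilibrium h)

theorem mul_mul_eq_mul_mul_of_intertwine [Semiring R] {m : Type*} [Fintype m]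
    {A : Matrix n n R} {U : Matrix n r R} {W : Matrix m n R}
    {M : Matrix r r R} {N : Matrix m m R}
    (hU : A * U = U * M) (hW : W * A = N * W) :
    (W * U) * M = N * (W * U) := by
  rw [Matrix.mul_assoc, ← hU, ← Matrix.mul_assoc, hW, Matrix.mul_assoc]

theorem eq_inv_mul_mul_of_mul_eq_mul [CommRing R] [DecidableEq r]
    {P M N : Matrix r r R} (hP : IsUnit P) (h : P * M = N * P) :
    M = P⁻¹ * N * P := by
  rw [Matrix.mul_assoc, ← h,
    nonsing_inv_mul_cancel_left _ _ ((isUnit_iff_isUnit_det P).mp hP)]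

end Matrix

theorem intertwining_of_left_right_equilibria
    (n r : ℕ)
    (A : Matrix (Fin n) (Fin n) ℝ)
    (Ub : Matrix (Fin n) (Fin r) ℝ)
    (hUbeq : (1 - Ub * Ubᵀ) * A * Ub = 0)
    (Vb : Matrix (Fin n) (Fin r) ℝ)
    (hVbeq : (1 - Vb * Vbᵀ) * Aᵀ * Vb = 0) :
    (Vbᵀ * Ub) * (Ubᵀ * A * Ub) = (Vbᵀ * A * Vb) * (Vbᵀ * Ub) ∧
    (IsUnit (Vbᵀ * Ub) →
      Ubᵀ * A * Ub = (Vbᵀ * Ub)⁻¹ * (Vbᵀ * A * Vb) * (Vbᵀ * Ub)) := by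
  have key : (Vbᵀ * Ub) * (Ubᵀ * A * Ub) = (Vbᵀ * A * Vb) * (Vbᵀ * Ub) :=
    mul_mul_eq_mul_mul_of_intertwine (mul_eq_mul_reduced_of_oja_equilibrium hUbeq)
      (transpose_mul_eq_reduced_mul_of_oja_equilibrium hVbeq)
  exact ⟨key, fun hunit => eq_inv_mul_mul_of_mul_eq_mul hunit key⟩
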